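/- In an orthomodular lattice admitting a strong set of quantum states, the 3-Godowski equation holds: (a₁→a₂)∩(a₂→a₃)∩(a₃→a₁) = (a₃→a₂)∩(a₂→a₁)∩(a₁→a₃), where a→b := a'∪(a∩b). -/

import Mathlib

/-- An ortholattice: an algebra ⟨L, ', ∪, ∩⟩ satisfying the standard identities. -/
structure OL (L : Type*) where
  compl : L → L
  join : L → L → L
  meet : L → L → L
  join_comm : ∀ a b, join a b = join b a
  join_assoc : ∀ a b c, join (join a b) c = join a (join b c)
  compl_compl : ∀ a, compl (compl a) = a
  join_one : ∀ a b, join a (join b (compl b)) = join b (compl b)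
  absorb : ∀ a b, join a (meet a b) = a
  meet_def : ∀ a b, meet a b = compl (join (compl a) (compl b))

/-- The ordering relation on an ortholattice: a ≤ b iff a ∩ b = a. -/
def OL.le {L : Type*} (O : OL L) (a b : L) : Prop := O.meet a b = a

/-- A state on an ortholattice: m : L → [0,1] with m(1) = 1 and finite additivity
on orthogonal pairs (a ⊥ b iff a ≤ b'). -/
def OL.IsState {L : Type*} (O : OL L) (m : L → ℝ) : Prop :=
  (∀ a, 0 ≤ m a ∧ m a ≤ 1) ∧
  (∀ a, m (O.join a (O.compl a)) = 1) ∧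
  (∀ a b, O.le a (O.compl b) → m (O.join a b) = m a + m b)

/-- Sasaki implication a → b := a' ∪ (a ∩ b). -/
def OL.arr {L : Type*} (O : OL L) (a b : L) : L := O.join (O.compl a) (O.meet a b)

/-- S is a strong set of quantum states on O. -/
def OL.IsStrongQuantum {L : Type*} (O : OL L) (S : Set (L → ℝ)) : Prop :=
  S.Nonempty ∧ (∀ m ∈ S, O.IsState m) ∧
  ∀ a b : L, ∃ m ∈ S, ((m a = 1 → m b = 1) → O.le a b)

/-!
A state `m` with `m (a → b) = 1` satisfies `m (a ∩ b) = m a`, hence `m a ≤ m b`. If `m` takes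
the value `1` on `(a₁ → a₂) ∩ (a₂ → a₃) ∩ (a₃ → a₁)`, it does so on each of the three
implications, so `m a₁ ≤ m a₂ ≤ m a₃ ≤ m a₁`; then `m (aⱼ ∩ aᵢ) = m aᵢ` also for the reversed
pairs, i.e. `m` is `1` on each reversed implication. A strong set of states detects the order, so
the left side lies below the right side, and by symmetry the two are equal.
-/

namespace OL

variable {L : Type*} (O : OL L)

/-- The orthomodular law in distributive form; `IsOrthomodular.join_meet_compl` is the usual
`a ≤ b → a ∪ (b ∩ a') = b`. -/
def IsOrthomodular : Prop :=
  ∀ a b c : L, O.le b a → O.le c (O.compl a) →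
    O.meet a (O.join b c) = O.join (O.meet a b) (O.meet a c)

section Ortholattice

theorem meet_comm (a b : L) : O.meet a b = O.meet b a := by
  rw [O.meet_def, O.meet_def, O.join_comm]

theorem compl_meet (a b : L) : O.compl (O.meet a b) = O.join (O.compl a) (O.compl b) := by
  rw [O.meet_def, O.compl_compl]

theorem compl_join (a b : L) : O.compl (O.join a b) = O.meet (O.compl a) (O.compl b) := by
  rw [O.meet_def, O.compl_compl, O.compl_compl]

theorem meet_assoc (a b c : L) : O.meet (O.meet a b) c = O.meet a (O.meet b c) := by
  rw [O.meet_def (O.meet a b) c, O.compl_meet, O.join_assoc, ← O.compl_meet b c, ← O.meet_def]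

theorem meet_join_self (a b : L) : O.meet a (O.join a b) = a := by
  rw [O.meet_def, O.compl_join a b, O.absorb, O.compl_compl]

theorem join_self (a : L) : O.join a a = a := by
  simpa only [O.meet_join_self] using O.absorb a (O.join a a)

theorem meet_self (a : L) : O.meet a a = a := by
  rw [O.meet_def, O.join_self, O.compl_compl]

theorem le_refl (a : L) : O.le a a := O.meet_self a

theorem join_eq_of_le {a b : L} (h : O.le a b) : O.join a b = b := by
  have h' := O.absorb b a
  rwa [O.meet_comm, h, O.join_comm] at h'

theorem le_of_join_eq {a b : L} (h : O.join a b = b) : O.le a b := by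
  rw [OL.le, ← h]
  exact O.meet_join_self a b

theorem le_trans {a b c : L} (hab : O.le a b) (hbc : O.le b c) : O.le a c := by
  rw [OL.le, ← hab, O.meet_assoc, hbc]

theorem le_antisymm {a b : L} (hab : O.le a b) (hba : O.le b a) : a = b := by
  rw [← hab, O.meet_comm, hba]

theorem meet_le_left (a b : L) : O.le (O.meet a b) a := by
  rw [OL.le, O.meet_comm, ← O.meet_assoc, O.meet_self]

theorem meet_le_right (a b : L) : O.le (O.meet a b) b := by
  rw [OL.le, O.meet_assoc, O.meet_self]

theorem le_meet {x a b : L} (ha : O.le x a) (hb : O.le x b) : O.le x (O.meet a b) := by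
  rw [OL.le, ← O.meet_assoc, ha, hb]

theorem le_join_left (a b : L) : O.le a (O.join a b) :=
  O.le_of_join_eq (by rw [← O.join_assoc, O.join_self])

theorem compl_le_compl {a b : L} (h : O.le a b) : O.le (O.compl b) (O.compl a) := by
  apply O.le_of_join_eq
  rw [O.join_comm, ← O.compl_meet, h]

theorem meet_compl_le (a b : L) : O.le (O.meet b (O.compl b)) a := by
  have h := O.compl_le_compl (O.le_of_join_eq (O.join_one (O.compl a) (O.compl b)))
  rwa [O.compl_compl a, ← O.meet_def] at h

theorem join_meet_compl_self (a b : L) : O.join a (O.meet b (O.compl b)) = a := by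
  rw [O.join_comm]
  exact O.join_eq_of_le (O.meet_compl_le a b)

end Ortholattice

section Orthomodular

variable {O}

theorem IsOrthomodular.meet_join_compl (hO : O.IsOrthomodular) {a b : L} (h : O.le a b) :
    O.meet b (O.join a (O.compl b)) = a := by
  have h' := hO b a (O.compl b) h (O.le_refl _)
  rwa [O.meet_comm b a, h, O.join_meet_compl_self] at h'

theorem IsOrthomodular.join_meet_compl (hO : O.IsOrthomodular) {a b : L} (h : O.le a b) :
    O.join a (O.meet b (O.compl a)) = b := by
  have h' := congrArg O.compl (hO.meet_join_compl (O.compl_le_compl h))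
  rwa [O.compl_compl, O.compl_meet, O.compl_compl, O.compl_join, O.compl_compl] at h'

end Orthomodular

namespace IsState

variable {O} {m : L → ℝ}

theorem map_compl (hm : O.IsState m) (a : L) : m (O.compl a) = 1 - m a := by
  have hadd := hm.2.2 a (O.compl a) (by rw [O.compl_compl]; exact O.le_refl a)
  linarith [hm.2.1 a]

theorem map_arr (hm : O.IsState m) (a b : L) : m (O.arr a b) = 1 - m a + m (O.meet a b) := by
  have hperp : O.le (O.compl a) (O.compl (O.meet a b)) := by
    rw [O.compl_meet]
    exact O.le_join_left _ _
  rw [OL.arr, hm.2.2 _ _ hperp, hm.map_compl]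

theorem mono (hO : O.IsOrthomodular) (hm : O.IsState m) {a b : L} (h : O.le a b) :
    m a ≤ m b := by
  have hperp : O.le a (O.compl (O.meet b (O.compl a))) := by
    rw [O.compl_meet, O.compl_compl, O.join_comm]
    exact O.le_join_left _ _
  have hadd := hm.2.2 a _ hperp
  rw [hO.join_meet_compl h] at hadd
  linarith [(hm.1 (O.meet b (O.compl a))).1]

theorem eq_one_of_le (hO : O.IsOrthomodular) (hm : O.IsState m) {a b : L} (ha : m a = 1)
    (h : O.le a b) : m b = 1 := by
  linarith [hm.mono hO h, (hm.1 b).2]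

theorem map_meet_of_arr_eq_one (hm : O.IsState m) {a b : L} (h : m (O.arr a b) = 1) :
    m (O.meet a b) = m a := by
  linarith [hm.map_arr a b]

theorem le_of_arr_eq_one (hO : O.IsOrthomodular) (hm : O.IsState m) {a b : L}
    (h : m (O.arr a b) = 1) : m a ≤ m b := by
  rw [← hm.map_meet_of_arr_eq_one h]
  exact hm.mono hO (O.meet_le_right a b)

theorem arr_eq_one_of_cycle (hO : O.IsOrthomodular) (hm : O.IsState m) {a₁ a₂ a₃ : L}
    (h₁₂ : m (O.arr a₁ a₂) = 1) (h₂₃ : m (O.arr a₂ a₃) = 1) (h₃₁ : m (O.arr a₃ a₁) = 1) :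
    m (O.arr a₂ a₁) = 1 := by
  have hmeet : m (O.meet a₂ a₁) = m a₁ := by rw [O.meet_comm, hm.map_meet_of_arr_eq_one h₁₂]
  linarith [hm.map_arr a₂ a₁, hm.le_of_arr_eq_one hO h₁₂, hm.le_of_arr_eq_one hO h₂₃,
    hm.le_of_arr_eq_one hO h₃₁]

end IsState

variable {O} in
theorem IsStrongQuantum.le_of_forall_isState {S : Set (L → ℝ)} (hS : O.IsStrongQuantum S)
    {a b : L} (h : ∀ m, O.IsState m → m a = 1 → m b = 1) : O.le a b := by
  obtain ⟨m, hmS, hm⟩ := hS.2.2 a b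
  exact hm (h m (hS.2.1 m hmS))

theorem godowski3_le (hO : O.IsOrthomodular) {S : Set (L → ℝ)} (hS : O.IsStrongQuantum S)
    (a₁ a₂ a₃ : L) :
    O.le (O.meet (O.arr a₁ a₂) (O.meet (O.arr a₂ a₃) (O.arr a₃ a₁)))
      (O.meet (O.arr a₃ a₂) (O.meet (O.arr a₂ a₁) (O.arr a₁ a₃))) := by
  set P := O.meet (O.arr a₁ a₂) (O.meet (O.arr a₂ a₃) (O.arr a₃ a₁))
  have hP : ∀ m, O.IsState m → m P = 1 →
      m (O.arr a₁ a₂) = 1 ∧ m (O.arr a₂ a₃) = 1 ∧ m (O.arr a₃ a₁) = 1 := fun m hm h =>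
    ⟨hm.eq_one_of_le hO h (O.meet_le_left _ _),
      hm.eq_one_of_le hO h (O.le_trans (O.meet_le_right _ _) (O.meet_le_left _ _)),
      hm.eq_one_of_le hO h (O.le_trans (O.meet_le_right _ _) (O.meet_le_right _ _))⟩
  refine O.le_meet (hS.le_of_forall_isState fun m hm h => ?_)
    (O.le_meet (hS.le_of_forall_isState fun m hm h => ?_)
      (hS.le_of_forall_isState fun m hm h => ?_)) <;>
    obtain ⟨h₁₂, h₂₃, h₃₁⟩ := hP m hm h
  · exact hm.arr_eq_one_of_cycle hO h₂₃ h₃₁ h₁₂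
  · exact hm.arr_eq_one_of_cycle hO h₁₂ h₂₃ h₃₁
  · exact hm.arr_eq_one_of_cycle hO h₃₁ h₁₂ h₂₃

end OL

theorem stmt_6 {L : Type*} (O : OL L)
    (hOML : ∀ a b c : L, O.le b a → O.le c (O.compl a) →
      O.meet a (O.join b c) = O.join (O.meet a b) (O.meet a c))
    (S : Set (L → ℝ)) (hS : O.IsStrongQuantum S)
    (a₁ a₂ a₃ : L) :
    O.meet (O.arr a₁ a₂) (O.meet (O.arr a₂ a₃) (O.arr a₃ a₁)) =
      O.meet (O.arr a₃ a₂) (O.meet (O.arr a₂ a₁) (O.arr a₁ a₃)) :=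
  O.le_antisymm (O.godowski3_le hOML hS a₁ a₂ a₃) (O.godowski3_le hOML hS a₃ a₂ a₁)
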